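/- Let σ, σ′ ∈ S_n with r_i(σ′) = r_i(σ) + 1 for a single index i_0 and r_i(σ′) = r_i(σ) for all i ≠ i_0 (so inv(σ′) = inv(σ) + 1). Then σ′ is obtained from σ by swapping the values σ(i_0) and σ(j_0), where σ(j_0) = min{σ(j) : j > i_0, σ(j) > σ(i_0)}. -/

import Mathlib

/-!
The right-inversion counts (the Lehmer code) determine a permutation: at the first position `i`
where `σ` and `τ` differ, both leave the same set of values at positions `≥ i`, so the one with
the smaller value at `i` has fewer smaller values to its right. It therefore suffices to check
that `σ * swap i₀ j₀` has the prescribed counts. Since no value to the right of `i₀` lies strictly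
between `σ i₀` and `σ j₀`, the swap adds `j₀` to the inversions at `i₀` and changes no other
count. Such a `j₀` exists because `r_{i₀}(σ) < r_{i₀}(σ') ≤ #{j > i₀}`.
-/

/-- Right-inversion count: `r_i(σ) = #{j > i : σ(j) < σ(i)}`. -/
def rCount {n : ℕ} (σ : Equiv.Perm (Fin n)) (i : Fin n) : ℕ :=
  (Finset.univ.filter (fun j : Fin n => i < j ∧ σ j < σ i)).card

open Finset Equiv

variable {n : ℕ}

lemma rCount_eq_card_filter_compl_image (σ : Perm (Fin n)) (i : Fin n) :
    rCount σ i = #(((Iio i).image σ)ᶜ.filter (· < σ i)) := by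
  rw [rCount, ← card_image_of_injective _ σ.injective]
  congr 1
  ext v
  obtain ⟨j, rfl⟩ := σ.surjective v
  simp only [mem_image, mem_filter, mem_univ, true_and, mem_compl, mem_Iio,
    EmbeddingLike.apply_eq_iff_eq, exists_eq_right, not_lt]
  constructor
  · exact fun ⟨hij, hj⟩ => ⟨hij.le, hj⟩
  · exact fun ⟨hij, hj⟩ => ⟨hij.lt_of_ne (by rintro rfl; exact hj.false), hj⟩

lemma rCount_lt_rCount_of_eqOn_Iio {σ τ : Perm (Fin n)} {i : Fin n}
    (heq : ∀ j < i, σ j = τ j) (hlt : σ i < τ i) : rCount σ i < rCount τ i := by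
  have himage : (Iio i).image σ = (Iio i).image τ :=
    image_congr fun j hj => heq j (mem_Iio.mp hj)
  rw [rCount_eq_card_filter_compl_image, rCount_eq_card_filter_compl_image, himage]
  refine card_lt_card ((ssubset_iff_of_subset ?_).mpr ⟨σ i, ?_, ?_⟩)
  · exact monotone_filter_right _ fun _ _ hv => hv.trans hlt
  · rw [← himage]
    simpa using hlt
  · simp

theorem rCount_injective : Function.Injective (rCount (n := n)) := by
  intro σ τ hστ
  ext i : 1
  induction i using WellFoundedLT.induction with
  | _ i ih =>
    rcases lt_trichotomy (σ i) (τ i) with hlt | heq | hgt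
    · exact absurd (congrFun hστ i) (rCount_lt_rCount_of_eqOn_Iio ih hlt).ne
    · exact heq
    · exact absurd (congrFun hστ i)
        (rCount_lt_rCount_of_eqOn_Iio (fun j hj => (ih j hj).symm) hgt).ne'

lemma exists_lt_of_rCount_lt {σ τ : Perm (Fin n)} {i : Fin n} (h : rCount σ i < rCount τ i) :
    ∃ j, i < j ∧ σ i < σ j := by
  by_contra! hmax
  have hall : rCount σ i = #(univ.filter (i < ·)) := by
    refine congrArg card (filter_congr fun j _ => ⟨And.left, fun hij => ⟨hij, ?_⟩⟩)
    exact (hmax j hij).lt_of_ne (σ.injective.ne hij.ne')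
  exact h.not_ge (hall ▸ card_le_card (monotone_filter_right _ fun _ _ => And.left))

section Swap

variable {σ : Perm (Fin n)} {a b i : Fin n}

lemma rCount_mul_swap_of_lt_of_lt (ha : i < a) (hb : i < b) :
    rCount (σ * swap a b) i = rCount σ i := by
  have hmem : ∀ j, i < swap a b j ↔ i < j := by
    intro j
    rcases eq_or_ne j a with rfl | hja
    · simp [ha, hb]
    rcases eq_or_ne j b with rfl | hjb
    · simp [ha, hb]
    rw [swap_apply_of_ne_of_ne hja hjb]
  have hi : swap a b i = i := swap_apply_of_ne_of_ne ha.ne hb.ne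
  refine card_nbij' (swap a b) (swap a b) (fun j hj => ?_) (fun j hj => ?_)
    (fun j _ => swap_apply_self _ _ _) (fun j _ => swap_apply_self _ _ _)
  all_goals
    simp only [coe_filter, Set.mem_ofPred_eq, mem_univ, true_and, Perm.mul_apply, hi, hmem,
      swap_apply_self] at hj ⊢
    exact hj

lemma rCount_mul_swap_of_ne (ha : i ≠ a) (hb : i ≠ b) (hab : σ a < σ i ↔ σ b < σ i) :
    rCount (σ * swap a b) i = rCount σ i := by
  refine congrArg card (filter_congr fun j _ => ?_)
  rw [Perm.mul_apply, Perm.mul_apply, swap_apply_of_ne_of_ne ha hb]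
  rcases eq_or_ne j a with rfl | hja
  · simp [hab]
  rcases eq_or_ne j b with rfl | hjb
  · simp [hab]
  rw [swap_apply_of_ne_of_ne hja hjb]

lemma rCount_mul_swap_left (hab : a < b) (hv : σ a < σ b)
    (hgap : ∀ j, a < j → (σ j < σ b ↔ σ j < σ a)) :
    rCount (σ * swap a b) a = rCount σ a + 1 := by
  have hset : univ.filter (fun j => a < j ∧ (σ * swap a b) j < (σ * swap a b) a)
      = insert b (univ.filter fun j => a < j ∧ σ j < σ a) := by
    ext j
    simp only [mem_insert, mem_filter, mem_univ, true_and, Perm.mul_apply, swap_apply_left]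
    rcases eq_or_ne j b with rfl | hjb
    · simp [hab, hv]
    rcases eq_or_ne j a with rfl | hja
    · simp [hjb]
    rw [swap_apply_of_ne_of_ne hja hjb, or_iff_right hjb]
    exact and_congr_right (hgap j)
  rw [rCount, hset, card_insert_of_notMem]
  · rfl
  · simp [hv.le]

lemma rCount_mul_swap_right (hab : a < b) (hgap : ∀ j, a < j → (σ j < σ b ↔ σ j < σ a)) :
    rCount (σ * swap a b) b = rCount σ b := by
  refine congrArg card (filter_congr fun j _ => and_congr_right fun hbj => ?_)
  rw [Perm.mul_apply, Perm.mul_apply, swap_apply_right,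
    swap_apply_of_ne_of_ne (hab.trans hbj).ne' hbj.ne']
  exact (hgap j (hab.trans hbj)).symm

lemma rCount_mul_swap_of_ne_of_ne (hab : a < b) (hgap : ∀ j, a < j → (σ j < σ b ↔ σ j < σ a))
    (ha : i ≠ a) (hb : i ≠ b) : rCount (σ * swap a b) i = rCount σ i := by
  rcases ha.lt_or_gt with hia | hai
  · exact rCount_mul_swap_of_lt_of_lt hia (hia.trans hab)
  refine rCount_mul_swap_of_ne ha hb ?_
  have hna : σ i ≠ σ a := σ.injective.ne ha
  have hnb : σ i ≠ σ b := σ.injective.ne hb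
  rw [← not_iff_not, not_lt, not_lt, hna.le_iff_lt, hnb.le_iff_lt]
  exact (hgap i hai).symm

end Swap

/-- If `σ'` has the same right-inversion counts as `σ` except `r_{i₀}(σ') = r_{i₀}(σ) + 1`,
then `σ'` is obtained from `σ` by swapping the values at positions `i₀` and `j₀`, where
`σ(j₀) = min{σ(j) : j > i₀, σ(j) > σ(i₀)}`. -/
theorem single_rightCount_increment_is_swap (n : ℕ) (σ σ' : Equiv.Perm (Fin n))
    (i0 : Fin n) (h1 : rCount σ' i0 = rCount σ i0 + 1)
    (h2 : ∀ i, i ≠ i0 → rCount σ' i = rCount σ i) :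
    ∃ j0 : Fin n, i0 < j0 ∧ σ i0 < σ j0 ∧
      (∀ j, i0 < j → σ i0 < σ j → σ j0 ≤ σ j) ∧
      σ' = σ * Equiv.swap i0 j0 := by
  obtain ⟨j, hj⟩ := exists_lt_of_rCount_lt (σ := σ) (τ := σ') (i := i0) (by omega)
  obtain ⟨j0, hj0, hmin⟩ :=
    exists_min_image (univ.filter fun j => i0 < j ∧ σ i0 < σ j) σ ⟨j, by simpa using hj⟩
  simp only [mem_filter, mem_univ, true_and] at hj0 hmin
  obtain ⟨hij0, hv⟩ := hj0
  have hgap : ∀ j, i0 < j → (σ j < σ j0 ↔ σ j < σ i0) := by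
    refine fun j hj => ⟨fun hlt => ?_, fun hlt => hlt.trans hv⟩
    have hle : σ j ≤ σ i0 := not_lt.mp fun hgt => (hmin j ⟨hj, hgt⟩).not_gt hlt
    exact hle.lt_of_ne (σ.injective.ne hj.ne')
  refine ⟨j0, hij0, hv, fun j hj hgt => hmin j ⟨hj, hgt⟩, rCount_injective (funext fun i => ?_)⟩
  rcases eq_or_ne i i0 with rfl | hi
  · rw [h1, rCount_mul_swap_left hij0 hv hgap]
  rw [h2 i hi]
  rcases eq_or_ne i j0 with rfl | hj
  · exact (rCount_mul_swap_right hij0 hgap).symm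
  · exact (rCount_mul_swap_of_ne_of_ne hij0 hgap hi hj).symm
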